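/- arXiv:1408.0596 — 3 statements merged into one kernel-verified Lean document; each statement's English description precedes it below -/
import Mathlib

section
/- Let G be a finite simple graph, let M be the output matching of a 1-2-MinGreedy execution on G, and let M* be a maximum matching of G in normal form with respect to M. Let X be an M-augmenting path of (V, M ∪ M*) with creation step i, in which the algorithm selects u_i and matches it with v_i, and suppose that at step i some transfer has source u_i or v_i. If the degree of u_i in G_{i-1} is at least 3, then every endpoint w that is the target of a transfer with source u_i or v_i has degree exactly 1 in G_i. -/
namespace MinGreedy

noncomputable section

open SimpleGraph

/-- The degree of a vertex `x` in the graph `H`. -/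
def deg {V : Type} (H : SimpleGraph V) (x : V) : ℕ :=
  (H.neighborSet x).ncard

/-- `M` is a matching of `G`, given as a set of pairwise disjoint edges of `G`. -/
def IsMatchingSet {V : Type} (G : SimpleGraph V) (M : Set (Sym2 V)) : Prop :=
  M ⊆ G.edgeSet ∧ ∀ e ∈ M, ∀ f ∈ M, e ≠ f → ∀ x : V, x ∈ e → x ∉ f

/-- `M` is a maximum matching of `G`. -/
def IsMaxMatchingSet {V : Type} (G : SimpleGraph V) (M : Set (Sym2 V)) : Prop :=
  IsMatchingSet G M ∧ ∀ N : Set (Sym2 V), IsMatchingSet G N → N.ncard ≤ M.ncard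

/-- `ν G`, the maximum size of a matching of `G`. -/
def nu {V : Type} (G : SimpleGraph V) : ℕ :=
  sSup {n | ∃ M : Set (Sym2 V), IsMatchingSet G M ∧ M.ncard = n}

/-- `G` has maximum degree at most `Δ`. -/
def maxDegLE {V : Type} (G : SimpleGraph V) (Δ : ℕ) : Prop :=
  ∀ x : V, deg G x ≤ Δ

/-- An execution of a greedy matching algorithm on `G`: in step `i` (`0 ≤ i < k`) the
edge `{sel i, oth i}` of `Gs i` is picked with selected vertex `sel i`, and `Gs (i+1)`
is obtained from `Gs i` by deleting all edges incident with `sel i` or `oth i`;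
at the end `Gs k` has no edges. -/
structure GreedyExec (V : Type) (G : SimpleGraph V) where
  k : ℕ
  Gs : ℕ → SimpleGraph V
  sel : ℕ → V
  oth : ℕ → V
  init : Gs 0 = G
  adj : ∀ i < k, (Gs i).Adj (sel i) (oth i)
  step : ∀ i < k, Gs (i + 1) =
    SimpleGraph.fromEdgeSet {e | e ∈ (Gs i).edgeSet ∧ sel i ∉ e ∧ oth i ∉ e}
  final : (Gs k).edgeSet = ∅

/-- The output matching `M = {e_1, …, e_k}` of an execution. -/
def GreedyExec.M {V : Type} {G : SimpleGraph V} (E : GreedyExec V G) : Set (Sym2 V) :=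
  {e | ∃ i < E.k, e = s(E.sel i, E.oth i)}

/-- The execution is a MinGreedy execution: in each step the selected vertex has
minimum positive degree in the current graph. -/
def GreedyExec.IsMinGreedy {V : Type} {G : SimpleGraph V} (E : GreedyExec V G) : Prop :=
  ∀ i < E.k, ∀ x : V, 0 < deg (E.Gs i) x → deg (E.Gs i) (E.sel i) ≤ deg (E.Gs i) x

/-- The execution is a 1-2-MinGreedy execution: whenever the current graph has a vertex of
degree 1 or 2, the selected vertex has minimum positive degree in the current graph. -/
def GreedyExec.Is12MinGreedy {V : Type} {G : SimpleGraph V} (E : GreedyExec V G) : Prop :=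
  ∀ i < E.k, (∃ x : V, deg (E.Gs i) x = 1 ∨ deg (E.Gs i) x = 2) →
    ∀ x : V, 0 < deg (E.Gs i) x → deg (E.Gs i) (E.sel i) ≤ deg (E.Gs i) x

/-- `p 0, p 1, …, p (2m+1)` is an `M`-augmenting path: an `M`-alternating path whose
first and last edges lie in `Mopt` and whose two endpoints `p 0` and `p (2m+1)` are
not covered by `M`; it has `m` edges of `M` and `m+1` edges of `Mopt`. -/
def IsAugPath {V : Type} (M Mopt : Set (Sym2 V)) (m : ℕ) (p : ℕ → V) : Prop :=
  (∀ i ≤ 2 * m + 1, ∀ j ≤ 2 * m + 1, p i = p j → i = j) ∧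
  (∀ j ≤ 2 * m, (j % 2 = 0 → s(p j, p (j + 1)) ∈ Mopt) ∧
                (j % 2 = 1 → s(p j, p (j + 1)) ∈ M)) ∧
  (∀ e ∈ M, p 0 ∉ e ∧ p (2 * m + 1) ∉ e)

/-- The vertex set of the path `p 0, …, p (2m+1)`. -/
def pathSupp {V : Type} (m : ℕ) (p : ℕ → V) : Set V := p '' {j | j ≤ 2 * m + 1}

/-- `w` is an endpoint of an `M`-augmenting path of the graph `(V, M ∪ Mopt)`. -/
def IsPathEndpoint {V : Type} (M Mopt : Set (Sym2 V)) (w : V) : Prop :=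
  ∃ m p, IsAugPath M Mopt m p ∧ (w = p 0 ∨ w = p (2 * m + 1))

/-- `S` is the vertex set of a singleton component: a single edge of `M ∩ Mopt`. -/
def IsSingletonComp {V : Type} (M Mopt : Set (Sym2 V)) (S : Set V) : Prop :=
  ∃ x y : V, x ≠ y ∧ s(x, y) ∈ M ∧ s(x, y) ∈ Mopt ∧ S = ({x, y} : Set V)

/-- `Mopt` is a maximum matching of `G` in normal form with respect to `M`: every
(nontrivial) connected component of the graph `(V, M ∪ Mopt)` is a singleton
(a single edge of `M ∩ Mopt`) or an `M`-augmenting path. -/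
def NormalForm {V : Type} (G : SimpleGraph V) (M Mopt : Set (Sym2 V)) : Prop :=
  IsMaxMatchingSet G Mopt ∧
  ∀ C : (SimpleGraph.fromEdgeSet (M ∪ Mopt)).ConnectedComponent,
    2 ≤ C.supp.ncard →
    IsSingletonComp M Mopt C.supp ∨
    ∃ m p, IsAugPath M Mopt m p ∧ C.supp = pathSupp m p

/-- `{x, y}` is an edge of `F = E ∖ (M ∪ Mopt)`. -/
def FEdge {V : Type} (G : SimpleGraph V) (M Mopt : Set (Sym2 V)) (x y : V) : Prop :=
  s(x, y) ∈ G.edgeSet ∧ s(x, y) ∉ M ∧ s(x, y) ∉ Mopt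

/-- The number of `F`-edges incident with `x`. -/
def Fdeg {V : Type} (G : SimpleGraph V) (M Mopt : Set (Sym2 V)) (x : V) : ℕ :=
  {e : Sym2 V | e ∈ G.edgeSet ∧ e ∉ M ∧ e ∉ Mopt ∧ x ∈ e}.ncard

/-- `x` is matched at step `i` of the execution, i.e. `x ∈ e_i`. -/
def matchedAt {V : Type} {G : SimpleGraph V} (E : GreedyExec V G) (i : ℕ) (x : V) : Prop :=
  i < E.k ∧ (x = E.sel i ∨ x = E.oth i)

/-- The `F`-edge `{v, w}` is a transfer from `v` to `w` arising at step `i`: `w` is an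
endpoint of an `M`-augmenting path, `v` is matched at step `i` and the degree of `w`
in the graph after step `i` is at most 1. -/
def transferAt {V : Type} {G : SimpleGraph V} (E : GreedyExec V G)
    (M Mopt : Set (Sym2 V)) (i : ℕ) (v w : V) : Prop :=
  FEdge G M Mopt v w ∧ IsPathEndpoint M Mopt w ∧ matchedAt E i v ∧
  deg (E.Gs (i + 1)) w ≤ 1

/-- The edge `{v, w}` is a transfer from `v` to `w`. -/
def IsTransfer {V : Type} {G : SimpleGraph V} (E : GreedyExec V G)
    (M Mopt : Set (Sym2 V)) (v w : V) : Prop :=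
  ∃ i, transferAt E M Mopt i v w

/-- `(v, w)` is an uncanceled transfer arising at step `i`: it is a transfer arising at
step `i` and it is not the case that (`w` has degree exactly 1 before step `i` with its
unique incident edge being `{v, w}`, and `w` is the target of at least two uncanceled
transfers arising at steps before `i`). -/
def uncanceledAt {V : Type} {G : SimpleGraph V} (E : GreedyExec V G)
    (M Mopt : Set (Sym2 V)) (i : ℕ) : V → V → Prop :=
  Nat.strongRecOn (motive := fun _ => V → V → Prop) i (fun i ih v w =>
    transferAt E M Mopt i v w ∧
    ¬(deg (E.Gs i) w = 1 ∧ (E.Gs i).Adj v w ∧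
      ∃ (j₁ : ℕ) (h₁ : j₁ < i) (v₁ : V) (j₂ : ℕ) (h₂ : j₂ < i) (v₂ : V),
        ih j₁ h₁ v₁ w ∧ ih j₂ h₂ v₂ w ∧ (j₁, v₁) ≠ (j₂, v₂)))

/-- `(v, w)` is an uncanceled transfer. -/
def IsUncanceledTransfer {V : Type} {G : SimpleGraph V} (E : GreedyExec V G)
    (M Mopt : Set (Sym2 V)) (v w : V) : Prop :=
  ∃ i, uncanceledAt E M Mopt i v w

/-- `(v, w)` is a canceled transfer. -/
def IsCanceledTransfer {V : Type} {G : SimpleGraph V} (E : GreedyExec V G)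
    (M Mopt : Set (Sym2 V)) (v w : V) : Prop :=
  IsTransfer E M Mopt v w ∧ ¬IsUncanceledTransfer E M Mopt v w

/-- `d_X`: the number of transfers whose source lies in the vertex set `X`. -/
def debits {V : Type} {G : SimpleGraph V} (E : GreedyExec V G)
    (M Mopt : Set (Sym2 V)) (X : Set V) : ℕ :=
  {q : V × V | IsTransfer E M Mopt q.1 q.2 ∧ q.1 ∈ X}.ncard

/-- `c_X`: the number of transfers whose target lies in the vertex set `X`. -/
def credits {V : Type} {G : SimpleGraph V} (E : GreedyExec V G)
    (M Mopt : Set (Sym2 V)) (X : Set V) : ℕ :=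
  {q : V × V | IsTransfer E M Mopt q.1 q.2 ∧ q.2 ∈ X}.ncard

/-- `i` is the creation step of the component with vertex set `X`: the step in which the
first edge of `M` lying in `X` is picked. -/
def creationStep {V : Type} {G : SimpleGraph V} (E : GreedyExec V G)
    (X : Set V) (i : ℕ) : Prop :=
  i < E.k ∧ E.sel i ∈ X ∧ E.oth i ∈ X ∧ ∀ j < i, ¬(E.sel j ∈ X ∧ E.oth j ∈ X)

/-- A degree-1 endpoint exists after the creation step `i`: some transfer with source
`sel i` or `oth i` targets an endpoint `w` of degree exactly 1 after step `i`. -/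
def Deg1EndpointAfter {V : Type} {G : SimpleGraph V} (E : GreedyExec V G)
    (M Mopt : Set (Sym2 V)) (i : ℕ) : Prop :=
  ∃ v w : V, (v = E.sel i ∨ v = E.oth i) ∧ transferAt E M Mopt i v w ∧
    deg (E.Gs (i + 1)) w = 1
section Aux

variable {V : Type} [Fintype V] {G : SimpleGraph V}

lemma deg_mono {H H' : SimpleGraph V} (h : H ≤ H') (x : V) : deg H x ≤ deg H' x :=
  Set.ncard_le_ncard (fun y hy => h hy) (Set.toFinite _)

lemma deg_pos_of_adj {H : SimpleGraph V} {x y : V} (h : H.Adj x y) : 0 < deg H x :=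
  (Set.ncard_pos (Set.toFinite _)).mpr ⟨y, h⟩

lemma step_le (E : GreedyExec V G) {l : ℕ} (hl : l < E.k) : E.Gs (l + 1) ≤ E.Gs l := by
  intro a b hab
  rw [E.step l hl, SimpleGraph.fromEdgeSet_adj] at hab
  exact hab.1.1

lemma Gs_le (E : GreedyExec V G) {a b : ℕ} (hab : a ≤ b) (hb : b ≤ E.k) :
    E.Gs b ≤ E.Gs a := by
  induction b with
  | zero => simp [Nat.le_zero.mp hab]
  | succ n ih =>
    rcases Nat.lt_or_ge a (n + 1) with h | h
    · exact le_trans (step_le E (Nat.lt_of_lt_of_le (Nat.lt_succ_self n) hb))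
        (ih (Nat.lt_succ_iff.mp h) (le_of_lt (Nat.lt_of_lt_of_le (Nat.lt_succ_self n) hb)))
    · have : a = n + 1 := le_antisymm hab h
      simp [this]

lemma adj_succ_of (E : GreedyExec V G) {l : ℕ} (hl : l < E.k) {x y : V}
    (h : (E.Gs l).Adj x y) (hx1 : x ≠ E.sel l) (hx2 : x ≠ E.oth l)
    (hy1 : y ≠ E.sel l) (hy2 : y ≠ E.oth l) : (E.Gs (l + 1)).Adj x y := by
  rw [E.step l hl, SimpleGraph.fromEdgeSet_adj]
  refine ⟨⟨h, ?_, ?_⟩, h.ne⟩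
  · rw [Sym2.mem_iff]; push_neg; exact ⟨fun e => hx1 e.symm, fun e => hy1 e.symm⟩
  · rw [Sym2.mem_iff]; push_neg; exact ⟨fun e => hx2 e.symm, fun e => hy2 e.symm⟩

lemma matched_deg_zero (E : GreedyExec V G) {l : ℕ} (hl : l < E.k) {x : V}
    (hx : x = E.sel l ∨ x = E.oth l) : deg (E.Gs (l + 1)) x = 0 := by
  have hns : (E.Gs (l + 1)).neighborSet x = ∅ := by
    ext y
    simp only [SimpleGraph.mem_neighborSet, Set.mem_empty_iff_false, iff_false]
    intro hadj
    rw [E.step l hl, SimpleGraph.fromEdgeSet_adj] at hadj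
    obtain ⟨⟨_, hs, ho⟩, _⟩ := hadj
    rcases hx with rfl | rfl
    · exact hs (Sym2.mem_mk_left _ _)
    · exact ho (Sym2.mem_mk_left _ _)
  simp [deg, hns]

lemma pos_deg_at (E : GreedyExec V G) {j : ℕ} (hj : j < E.k) {v : V}
    (hv : v = E.sel j ∨ v = E.oth j) : 0 < deg (E.Gs j) v := by
  rcases hv with rfl | rfl
  · exact deg_pos_of_adj (E.adj j hj)
  · exact deg_pos_of_adj (E.adj j hj).symm

lemma matched_step_unique (E : GreedyExec V G) {i j : ℕ} (hi : i < E.k) (hj : j < E.k)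
    {v : V} (hvi : v = E.sel i ∨ v = E.oth i) (hvj : v = E.sel j ∨ v = E.oth j) :
    i = j := by
  rcases lt_trichotomy i j with h | h | h
  · exfalso
    have h0 := matched_deg_zero E hi hvi
    have hle : deg (E.Gs j) v ≤ deg (E.Gs (i + 1)) v :=
      deg_mono (Gs_le E h (le_of_lt hj)) v
    have := pos_deg_at E hj hvj
    omega
  · exact h
  · exfalso
    have h0 := matched_deg_zero E hj hvj
    have hle : deg (E.Gs i) v ≤ deg (E.Gs (j + 1)) v :=
      deg_mono (Gs_le E h (le_of_lt hi)) v
    have := pos_deg_at E hi hvi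
    omega

end Aux

/-- if at the creation step of a path some transfer has source u_i or v_i
and the selected vertex u_i has degree at least 3, then every endpoint targeted by a
transfer with source u_i or v_i has degree exactly 1 after the creation step. -/
theorem deg1_endpoint_after_creation {V : Type} [Fintype V] (G : SimpleGraph V)
    (E : GreedyExec V G) (h12 : E.Is12MinGreedy)
    (Mopt : Set (Sym2 V)) (hnf : NormalForm G E.M Mopt)
    (m : ℕ) (p : ℕ → V) (hp : IsAugPath E.M Mopt m p)
    (i : ℕ) (hc : creationStep E (pathSupp m p) i)
    (hsome : ∃ v w : V, (v = E.sel i ∨ v = E.oth i) ∧ IsTransfer E E.M Mopt v w)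
    (hdu : 3 ≤ deg (E.Gs i) (E.sel i)) :
    ∀ v w : V, (v = E.sel i ∨ v = E.oth i) → IsTransfer E E.M Mopt v w →
      deg (E.Gs (i + 1)) w = 1 := by
  intro v w hv htr
  have hik : i < E.k := hc.1
  obtain ⟨j, hF, hep, hmatch, hdle⟩ := htr
  have hji : j = i := matched_step_unique E hmatch.1 hik hmatch.2 hv
  subst hji
  -- w is never matched
  have hwnm : ∀ l, l < E.k → w ≠ E.sel l ∧ w ≠ E.oth l := by
    obtain ⟨m', p', hap, hend⟩ := hep
    intro l hl
    have hmem : s(E.sel l, E.oth l) ∈ E.M := ⟨l, hl, rfl⟩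
    have hh := hap.2.2 _ hmem
    rcases hend with rfl | rfl
    · have := hh.1
      rw [Sym2.mem_iff] at this; push_neg at this; exact this
    · have := hh.2
      rw [Sym2.mem_iff] at this; push_neg at this; exact this
  -- v is not matched before step j
  have hvnb : ∀ l, l < j → v ≠ E.sel l ∧ v ≠ E.oth l := by
    intro l hl
    constructor <;> intro h
    · exact absurd (matched_step_unique E (lt_trans hl hmatch.1) hmatch.1
        (Or.inl h) hmatch.2) (Nat.ne_of_lt hl)
    · exact absurd (matched_step_unique E (lt_trans hl hmatch.1) hmatch.1
        (Or.inr h) hmatch.2) (Nat.ne_of_lt hl)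
  -- the edge {v, w} survives to step j
  have hGadj : G.Adj v w := (SimpleGraph.mem_edgeSet _).mp hF.1
  have hsurv : ∀ l, l ≤ j → (E.Gs l).Adj v w := by
    intro l hl
    induction l with
    | zero => rw [E.init]; exact hGadj
    | succ n ih =>
      have hn : n < j := Nat.lt_of_succ_le hl
      have hnk : n < E.k := lt_trans hn hmatch.1
      exact adj_succ_of E hnk (ih (le_of_lt hn)) (hvnb n hn).1 (hvnb n hn).2
        (hwnm n hnk).1 (hwnm n hnk).2
  have hadj_j : (E.Gs j).Adj v w := hsurv j le_rfl
  -- deg (Gs j) w ≥ 3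
  have hw3 : 3 ≤ deg (E.Gs j) w := by
    by_contra hcon
    push_neg at hcon
    have hwp : 0 < deg (E.Gs j) w := deg_pos_of_adj hadj_j.symm
    have h12' := h12 j hik ⟨w, by omega⟩ w hwp
    omega
  -- deletion removes at most 2 edges at w
  have hsub : (E.Gs j).neighborSet w \ {E.sel j, E.oth j} ⊆
      (E.Gs (j + 1)).neighborSet w := by
    rintro x ⟨hx, hx2⟩
    simp only [Set.mem_insert_iff, Set.mem_singleton_iff] at hx2
    push_neg at hx2
    exact adj_succ_of E hik hx (hwnm j hik).1 (hwnm j hik).2 hx2.1 hx2.2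
  have h2 : ({E.sel j, E.oth j} : Set V).ncard ≤ 2 := by
    have := Set.ncard_insert_le (E.sel j) ({E.oth j} : Set V)
    simpa [Set.ncard_singleton] using this
  have key : deg (E.Gs j) w ≤ deg (E.Gs (j + 1)) w + 2 := by
    calc deg (E.Gs j) w
        ≤ ((E.Gs j).neighborSet w \ {E.sel j, E.oth j}).ncard +
          ({E.sel j, E.oth j} : Set V).ncard :=
          Set.ncard_le_ncard_diff_add_ncard _ _ (Set.toFinite _)
      _ ≤ deg (E.Gs (j + 1)) w + 2 :=
          add_le_add (Set.ncard_le_ncard hsub (Set.toFinite _)) h2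
  omega

end

end MinGreedy
end

section
/- Let G be a finite simple graph, let M be the output matching of a 1-2-MinGreedy execution on G, and let M* be a maximum matching of G in normal form with respect to M. Let X be an M-augmenting path of (V, M ∪ M*) with creation step i (selected vertex u_i, matched with v_i), and suppose a degree-1 endpoint exists after creation of X, i.e. some transfer with source u_i or v_i targets an endpoint w with degree exactly 1 in G_i. Then the vertex u_{i+1} selected at step i+1 has degree exactly 1 in G_i, and step i+1 is not the creation step of any M-augmenting path of (V, M ∪ M*). -/
namespace MinGreedy

noncomputable section

open SimpleGraph

/-- An edge is present in `Gs j` iff it is an edge of `G` avoiding all vertices matched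
in steps before `j`. -/
lemma persist {V : Type} {G : SimpleGraph V} (E : GreedyExec V G) :
    ∀ j ≤ E.k, ∀ e : Sym2 V, e ∈ (E.Gs j).edgeSet ↔
      e ∈ G.edgeSet ∧ ∀ t < j, E.sel t ∉ e ∧ E.oth t ∉ e := by
  intro j
  induction j with
  | zero => intro _ e; simp [E.init]
  | succ n ih =>
    intro hj e
    have hn : n < E.k := hj
    rw [E.step n hn, SimpleGraph.edgeSet_fromEdgeSet, Set.mem_diff]
    constructor
    · rintro ⟨⟨he, hs, ho⟩, _⟩
      rcases (ih (le_of_lt hn) e).1 he with ⟨heG, hall⟩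
      refine ⟨heG, ?_⟩
      intro t ht
      rcases Nat.lt_succ_iff_lt_or_eq.1 ht with h | h
      · exact hall t h
      · subst h; exact ⟨hs, ho⟩
    · rintro ⟨heG, hall⟩
      refine ⟨⟨(ih (le_of_lt hn) e).2 ⟨heG, fun t ht => hall t (ht.trans n.lt_succ_self)⟩,
        (hall n n.lt_succ_self).1, (hall n n.lt_succ_self).2⟩, ?_⟩
      exact G.not_isDiag_of_mem_edgeSet heG

/-- Two edges of the output matching sharing a vertex are equal. -/
lemma M_mem_unique {V : Type} {G : SimpleGraph V} (E : GreedyExec V G) {e f : Sym2 V}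
    (he : e ∈ E.M) (hf : f ∈ E.M) {x : V} (hxe : x ∈ e) (hxf : x ∈ f) : e = f := by
  obtain ⟨a, ha, rfl⟩ := he
  obtain ⟨b, hb, rfl⟩ := hf
  have key : ∀ a b : ℕ, a < b → b < E.k → ∀ x : V,
      x ∈ (s(E.sel a, E.oth a) : Sym2 V) → x ∉ (s(E.sel b, E.oth b) : Sym2 V) := by
    intro a b hab hbk x hxa
    have hedge : (s(E.sel b, E.oth b) : Sym2 V) ∈ (E.Gs b).edgeSet :=
      (E.Gs b).mem_edgeSet.2 (E.adj b hbk)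
    have hav := ((persist E b hbk.le _).1 hedge).2 a hab
    rcases Sym2.mem_iff.1 hxa with rfl | rfl
    · exact hav.1
    · exact hav.2
  rcases lt_trichotomy a b with h | rfl | h
  · exact absurd hxf (key a b h hb x hxe)
  · rfl
  · exact absurd hxe (key b a h ha x hxf)

lemma two_le_deg {V : Type} [Fintype V] {H : SimpleGraph V} {x y z : V}
    (hy : H.Adj x y) (hz : H.Adj x z) (hne : y ≠ z) : 2 ≤ deg H x := by
  have hsub : ({y, z} : Set V) ⊆ H.neighborSet x := by
    intro a ha
    rcases ha with rfl | rfl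
    · exact hy
    · exact hz
  calc 2 = ({y, z} : Set V).ncard := (Set.ncard_pair hne).symm
    _ ≤ (H.neighborSet x).ncard := Set.ncard_le_ncard hsub (Set.toFinite _)

/-- if a degree-1 endpoint exists after the creation step i of a path X,
then the vertex selected at step i+1 has degree exactly 1 in G_i, and step i+1 is not
the creation step of any M-augmenting path. -/
theorem donation_step_not_creation {V : Type} [Fintype V] (G : SimpleGraph V)
    (E : GreedyExec V G) (h12 : E.Is12MinGreedy)
    (Mopt : Set (Sym2 V)) (hnf : NormalForm G E.M Mopt)
    (m : ℕ) (p : ℕ → V) (hp : IsAugPath E.M Mopt m p)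
    (i : ℕ) (hc : creationStep E (pathSupp m p) i)
    (hd1 : Deg1EndpointAfter E E.M Mopt i) :
    i + 1 < E.k ∧ deg (E.Gs (i + 1)) (E.sel (i + 1)) = 1 ∧
    ∀ (m' : ℕ) (p' : ℕ → V), IsAugPath E.M Mopt m' p' →
      ¬creationStep E (pathSupp m' p') (i + 1) := by
  obtain ⟨v, w, hv, htr, hw1⟩ := hd1
  obtain ⟨hik, -, -, -⟩ := hc
  -- a vertex of degree 1 exists after step i, so the graph has edges and i+1 < k
  have hwe : ∃ y, (E.Gs (i + 1)).Adj w y := by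
    have hne : ((E.Gs (i + 1)).neighborSet w).Nonempty :=
      Set.nonempty_of_ncard_ne_zero (by rw [show ((E.Gs (i+1)).neighborSet w).ncard = 1 from hw1]; omega)
    obtain ⟨y, hy⟩ := hne
    exact ⟨y, hy⟩
  have hik1 : i + 1 < E.k := by
    rcases Nat.lt_or_ge (i + 1) E.k with h | h
    · exact h
    · exfalso
      have hk : i + 1 = E.k := le_antisymm hik h
      obtain ⟨y, hy⟩ := hwe
      have hedge : s(w, y) ∈ (E.Gs (i + 1)).edgeSet := (E.Gs (i + 1)).mem_edgeSet.2 hy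
      rw [hk, E.final] at hedge
      exact hedge
  have hadj1 : (E.Gs (i + 1)).Adj (E.sel (i + 1)) (E.oth (i + 1)) := E.adj _ hik1
  have hselpos : 0 < deg (E.Gs (i + 1)) (E.sel (i + 1)) := by
    have : E.oth (i + 1) ∈ (E.Gs (i + 1)).neighborSet (E.sel (i + 1)) := hadj1
    have := Set.nonempty_of_mem this
    exact (Set.ncard_pos (Set.toFinite _)).2 this
  have hwpos : 0 < deg (E.Gs (i + 1)) w := by omega
  have hsel1 : deg (E.Gs (i + 1)) (E.sel (i + 1)) = 1 := by
    have hmin := h12 (i + 1) hik1 ⟨w, Or.inl hw1⟩ w hwpos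
    omega
  refine ⟨hik1, hsel1, ?_⟩
  rintro m' p' hp' ⟨-, hsel', hoth', hfirst⟩
  obtain ⟨hinj, hedges, hends⟩ := hp'
  -- the selected vertex u = sel (i+1) lies on the path p'
  obtain ⟨j, hj, hpj⟩ := hsel'
  simp only [Set.mem_setOf_eq] at hj
  -- the matching edge picked at step i+1
  have heM : (s(E.sel (i + 1), E.oth (i + 1)) : Sym2 V) ∈ E.M := ⟨i + 1, hik1, rfl⟩
  have heM' : (s(p' j, E.oth (i + 1)) : Sym2 V) ∈ E.M := by rw [hpj]; exact heM
  -- j is not an endpoint of the path, since p' j is covered by M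
  have hj0 : j ≠ 0 := by
    rintro rfl
    exact (hends _ heM').1 (Sym2.mem_mk_left _ _)
  have hjtop : j ≠ 2 * m' + 1 := by
    rintro rfl
    exact (hends _ heM').2 (Sym2.mem_mk_left _ _)
  -- produce the M-neighbor index jM and the Mopt-neighbor index jO of j on the path
  obtain ⟨jM, jO, hjM, hjO, hne1, hne2, hMpath, hOpath, hcov⟩ :
      ∃ jM jO : ℕ, jM ≤ 2 * m' + 1 ∧ jO ≤ 2 * m' + 1 ∧ jO ≠ j ∧ jO ≠ jM ∧
        (s(p' j, p' jM) : Sym2 V) ∈ E.M ∧ (s(p' j, p' jO) : Sym2 V) ∈ Mopt ∧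
        ((∀ e ∈ E.M, p' jO ∉ e) ∨
          ∃ a b : ℕ, a ≤ 2 * m' + 1 ∧ b ≤ 2 * m' + 1 ∧
            (s(p' a, p' b) : Sym2 V) ∈ E.M ∧ p' jO ∈ (s(p' a, p' b) : Sym2 V)) := by
    rcases Nat.even_or_odd j with hpar | hpar
    · -- j even, j ≥ 2 : M-neighbor j-1, Mopt-neighbor j+1
      have hmod : j % 2 = 0 := Nat.even_iff.mp hpar
      have hj2 : 2 ≤ j := by omega
      have hjle : j ≤ 2 * m' := by omega
      refine ⟨j - 1, j + 1, by omega, by omega, by omega, by omega, ?_, ?_, ?_⟩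
      · have h1 : j - 1 + 1 = j := by omega
        have hm := (hedges (j - 1) (by omega)).2 (by omega)
        rw [h1] at hm
        rw [Sym2.eq_swap]; exact hm
      · exact (hedges j (by omega)).1 hmod
      · by_cases htop : j + 1 = 2 * m' + 1
        · left; intro e he; rw [htop]; exact (hends e he).2
        · right
          exact ⟨j + 1, j + 2, by omega, by omega,
            (hedges (j + 1) (by omega)).2 (by omega), Sym2.mem_mk_left _ _⟩
    · -- j odd : M-neighbor j+1, Mopt-neighbor j-1
      have hmod : j % 2 = 1 := Nat.odd_iff.mp hpar
      have hjle : j ≤ 2 * m' := by omega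
      refine ⟨j + 1, j - 1, by omega, by omega, by omega, by omega, ?_, ?_, ?_⟩
      · exact (hedges j (by omega)).2 hmod
      · have h1 : j - 1 + 1 = j := by omega
        have hm := (hedges (j - 1) (by omega)).1 (by omega)
        rw [h1] at hm
        rw [Sym2.eq_swap]; exact hm
      · by_cases hbot : j = 1
        · left; intro e he; rw [show j - 1 = 0 by omega]; exact (hends e he).1
        · right
          have h1 : j - 2 + 1 = j - 1 := by omega
          have hm := (hedges (j - 2) (by omega)).2 (by omega)
          rw [h1] at hm
          exact ⟨j - 2, j - 1, by omega, by omega, hm, Sym2.mem_mk_right _ _⟩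
  -- identify oth (i+1) with the M-neighbor of p' j on the path
  have heq : (s(p' j, p' jM) : Sym2 V) = s(p' j, E.oth (i + 1)) :=
    M_mem_unique E hMpath heM' (Sym2.mem_mk_left _ _) (Sym2.mem_mk_left _ _)
  have hoth : p' jM = E.oth (i + 1) := Sym2.congr_right.1 heq
  have hxo : p' jO ≠ E.oth (i + 1) := by
    rw [← hoth]
    intro h
    exact hne2 (hinj jO hjO jM hjM h)
  have hxu : p' jO ≠ p' j := fun h => hne1 (hinj jO hjO j hj h)
  -- the Mopt edge {p' j, p' jO} is an edge of G
  have heG : (s(p' j, p' jO) : Sym2 V) ∈ G.edgeSet := hnf.1.1.1 hOpath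
  -- it survives until step i+1
  have hkey : ∀ t < i + 1, E.sel t ∉ (s(p' j, p' jO) : Sym2 V) ∧
      E.oth t ∉ (s(p' j, p' jO) : Sym2 V) := by
    intro t ht
    have hedge1 : (s(E.sel (i + 1), E.oth (i + 1)) : Sym2 V) ∈ (E.Gs (i + 1)).edgeSet :=
      (E.Gs (i + 1)).mem_edgeSet.2 hadj1
    have hav := ((persist E (i + 1) hik1.le _).1 hedge1).2 t ht
    have main : ∀ y : V, y ∈ (s(E.sel t, E.oth t) : Sym2 V) →
        y ∉ (s(p' j, p' jO) : Sym2 V) := by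
      intro y hyM hyE
      rcases Sym2.mem_iff.1 hyE with rfl | rfl
      · -- y = p' j, which is sel (i+1): contradiction with survival of edge i+1
        have hy1 : p' j ∈ (s(E.sel (i + 1), E.oth (i + 1)) : Sym2 V) := by
          rw [hpj]; exact Sym2.mem_mk_left _ _
        rcases Sym2.mem_iff.1 hyM with h | h
        · exact hav.1 (by rw [h] at hy1; exact hy1)
        · exact hav.2 (by rw [h] at hy1; exact hy1)
      · -- y = p' jO, matched before step i+1
        have hMt : (s(E.sel t, E.oth t) : Sym2 V) ∈ E.M := ⟨t, by omega, rfl⟩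
        rcases hcov with hunc | ⟨a, b, ha, hb, habM, hmem⟩
        · exact hunc _ hMt hyM
        · have heq2 : (s(E.sel t, E.oth t) : Sym2 V) = s(p' a, p' b) :=
            M_mem_unique E hMt habM hyM hmem
          have hs' : E.sel t ∈ (s(p' a, p' b) : Sym2 V) := heq2 ▸ Sym2.mem_mk_left _ _
          have ho' : E.oth t ∈ (s(p' a, p' b) : Sym2 V) := heq2 ▸ Sym2.mem_mk_right _ _
          apply hfirst t ht
          constructor
          · rcases Sym2.mem_iff.1 hs' with h | h
            · exact ⟨a, ha, h.symm⟩
            · exact ⟨b, hb, h.symm⟩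
          · rcases Sym2.mem_iff.1 ho' with h | h
            · exact ⟨a, ha, h.symm⟩
            · exact ⟨b, hb, h.symm⟩
    exact ⟨fun h => main _ (Sym2.mem_mk_left _ _) h, fun h => main _ (Sym2.mem_mk_right _ _) h⟩
  have hE1 : (s(p' j, p' jO) : Sym2 V) ∈ (E.Gs (i + 1)).edgeSet :=
    (persist E (i + 1) hik1.le _).2 ⟨heG, hkey⟩
  have hadjx : (E.Gs (i + 1)).Adj (p' j) (p' jO) := (E.Gs (i + 1)).mem_edgeSet.1 hE1
  have hadjm : (E.Gs (i + 1)).Adj (p' j) (E.oth (i + 1)) := by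
    rw [hpj]; exact hadj1
  have h2 : 2 ≤ deg (E.Gs (i + 1)) (p' j) := two_le_deg hadjx hadjm hxo
  rw [← hpj] at hsel1
  omega

end

end MinGreedy
end

section
/- Let Δ ≥ 4, let G be a finite simple graph of maximum degree at most Δ, let M be the output matching of a 1-2-MinGreedy execution on G, and let M* be a maximum matching of G in normal form with respect to M. Let X be an M-augmenting path of (V, M ∪ M*) with creation step i (selected vertex u_i, matched with v_i), suppose the degree of u_i in G_{i-1} equals 2, and suppose a degree-1 endpoint exists after creation of X, i.e. some transfer with source u_i or v_i targets an endpoint w with degree exactly 1 in G_i. Let u_{i+1}, v_{i+1} be the vertices matched at step i+1 with selected vertex u_{i+1}. Then u_i and u_{i+1} are sources of no transfers, and: (a) if u_{i+1} is an M*-neighbor of u_i or v_i (so u_{i+1} belongs to X), then the number of transfers with source u_i or v_i is at most Δ−2 and the number of transfers with source v_{i+1} is at most Δ−2; (b) if u_{i+1} belongs to a component of (V, M ∪ M*) different from X, then the number of transfers with source u_i or v_i is at most Δ−3 and the number of transfers with source v_{i+1} is at most Δ−1. -/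
namespace MinGreedy

noncomputable section

open SimpleGraph

section Aux

set_option linter.unusedSectionVars false

variable {V : Type} [Fintype V] {G : SimpleGraph V}

lemma edgeSet_Gs (E : GreedyExec V G) :
    ∀ i, i ≤ E.k → (E.Gs i).edgeSet =
      {e | e ∈ G.edgeSet ∧ ∀ j < i, E.sel j ∉ e ∧ E.oth j ∉ e} := by
  intro i
  induction i with
  | zero =>
    intro _
    rw [E.init]
    ext e
    simp
  | succ n ih =>
    intro h
    have hn : n < E.k := h
    rw [E.step n hn, SimpleGraph.edgeSet_fromEdgeSet, ih (le_of_lt hn)]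
    ext e
    simp only [Set.mem_diff, Set.mem_setOf_eq]
    constructor
    · rintro ⟨⟨⟨heG, hj⟩, hsel, hoth⟩, _⟩
      refine ⟨heG, fun j hj' => ?_⟩
      rcases Nat.lt_succ_iff_lt_or_eq.1 hj' with h' | rfl
      · exact hj j h'
      · exact ⟨hsel, hoth⟩
    · rintro ⟨heG, hj⟩
      exact ⟨⟨⟨heG, fun j hj' => hj j (Nat.lt_succ_of_lt hj')⟩,
        (hj n (Nat.lt_succ_self n)).1, (hj n (Nat.lt_succ_self n)).2⟩,
        SimpleGraph.not_isDiag_of_mem_edgeSet G heG⟩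

lemma adj_Gs (E : GreedyExec V G) {i : ℕ} (hi : i ≤ E.k) {x y : V} :
    (E.Gs i).Adj x y ↔ G.Adj x y ∧
      ∀ j < i, x ≠ E.sel j ∧ x ≠ E.oth j ∧ y ≠ E.sel j ∧ y ≠ E.oth j := by
  rw [← SimpleGraph.mem_edgeSet, ← SimpleGraph.mem_edgeSet, edgeSet_Gs E i hi]
  simp only [Set.mem_setOf_eq, Sym2.mem_iff]
  constructor
  · rintro ⟨h1, h2⟩
    refine ⟨h1, fun j hj => ?_⟩
    have h := h2 j hj
    push_neg at h
    exact ⟨fun e => h.1.1 e.symm, fun e => h.2.1 e.symm,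
      fun e => h.1.2 e.symm, fun e => h.2.2 e.symm⟩
  · rintro ⟨h1, h2⟩
    refine ⟨h1, fun j hj => ?_⟩
    have h := h2 j hj
    refine ⟨?_, ?_⟩ <;> rintro (h' | h')
    · exact h.1 h'.symm
    · exact h.2.2.1 h'.symm
    · exact h.2.1 h'.symm
    · exact h.2.2.2 h'.symm

lemma not_matched_lt (E : GreedyExec V G) {j : ℕ} {x : V} (hj : matchedAt E j x)
    {l : ℕ} (hl : l < j) : x ≠ E.sel l ∧ x ≠ E.oth l := by
  obtain ⟨hjk, hx⟩ := hj
  have hadj : (E.Gs j).Adj (E.sel j) (E.oth j) := E.adj j hjk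
  rw [adj_Gs E (le_of_lt hjk)] at hadj
  have h := hadj.2 l hl
  rcases hx with rfl | rfl
  · exact ⟨h.1, h.2.1⟩
  · exact ⟨h.2.2.1, h.2.2.2⟩

lemma matched_unique (E : GreedyExec V G) {i j : ℕ} {x : V}
    (hi : matchedAt E i x) (hj : matchedAt E j x) : i = j := by
  rcases lt_trichotomy i j with h | h | h
  · exact absurd hi.2 (by have := not_matched_lt E hj h; tauto)
  · exact h
  · exact absurd hj.2 (by have := not_matched_lt E hi h; tauto)

lemma endpoint_not_matched (E : GreedyExec V G) {Mopt : Set (Sym2 V)} {w : V}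
    (hw : IsPathEndpoint E.M Mopt w) {j : ℕ} : ¬ matchedAt E j w := by
  obtain ⟨m', p', hp', hw'⟩ := hw
  rintro ⟨hjk, hx⟩
  have heM : s(E.sel j, E.oth j) ∈ E.M := ⟨j, hjk, rfl⟩
  have h3 := hp'.2.2 _ heM
  have hwmem : w ∈ s(E.sel j, E.oth j) := by
    rcases hx with rfl | rfl
    · exact Sym2.mem_mk_left _ _
    · exact Sym2.mem_mk_right _ _
  rcases hw' with rfl | rfl
  · exact h3.1 hwmem
  · exact h3.2 hwmem

lemma isTransfer_elim (E : GreedyExec V G) {Mopt : Set (Sym2 V)} {v w : V} {i : ℕ}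
    (hv : matchedAt E i v) (ht : IsTransfer E E.M Mopt v w) :
    FEdge G E.M Mopt v w ∧ IsPathEndpoint E.M Mopt w ∧ deg (E.Gs (i + 1)) w ≤ 1 := by
  obtain ⟨j, hF, hend, hmj, hdeg⟩ := ht
  have : j = i := matched_unique E hmj hv
  subst this
  exact ⟨hF, hend, hdeg⟩

lemma adj_Gs_of (E : GreedyExec V G) {j : ℕ} (hj : j ≤ E.k) {x y : V} (hxy : G.Adj x y)
    (hx : ∀ l, l < j → ¬ matchedAt E l x) (hy : ∀ l, l < j → ¬ matchedAt E l y) :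
    (E.Gs j).Adj x y := by
  rw [adj_Gs E hj]
  refine ⟨hxy, fun l hl => ?_⟩
  have hlk : l < E.k := lt_of_lt_of_le hl hj
  have hx' := hx l hl
  have hy' := hy l hl
  simp only [matchedAt, hlk, true_and] at hx' hy'
  push_neg at hx' hy'
  exact ⟨hx'.1, hx'.2, hy'.1, hy'.2⟩

lemma transfer_adj (E : GreedyExec V G) {Mopt : Set (Sym2 V)} {v w : V} {i : ℕ}
    (hv : matchedAt E i v) (ht : IsTransfer E E.M Mopt v w) :
    (E.Gs i).Adj v w := by
  obtain ⟨⟨hF1, _, _⟩, hend, _⟩ := isTransfer_elim E hv ht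
  refine adj_Gs_of E (le_of_lt hv.1) ((SimpleGraph.mem_edgeSet (G := G)).1 hF1) ?_ ?_
  · intro l hl hm
    exact absurd (matched_unique E hm hv) (Nat.ne_of_lt hl)
  · intro l _ hm
    exact endpoint_not_matched E hend hm

lemma M_disj (E : GreedyExec V G) :
    ∀ e ∈ E.M, ∀ f ∈ E.M, e ≠ f → ∀ x : V, x ∈ e → x ∉ f := by
  rintro e ⟨i, hik, rfl⟩ f ⟨j, hjk, rfl⟩ hne x hxe hxf
  have hxi : matchedAt E i x := ⟨hik, by rwa [Sym2.mem_iff] at hxe⟩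
  have hxj : matchedAt E j x := ⟨hjk, by rwa [Sym2.mem_iff] at hxf⟩
  exact hne (by rw [matched_unique E hxi hxj])

lemma count_bound {α : Type} [Fintype α] {Δ : ℕ} {T N S : Set α}
    (hT : T ⊆ N) (hS : S ⊆ N) (hdisj : ∀ x ∈ S, x ∉ T) (hN : N.ncard ≤ Δ) :
    T.ncard ≤ Δ - S.ncard := by
  have h1 : T ⊆ N \ S := fun x hx => ⟨hT hx, fun hxS => hdisj x hxS hx⟩
  have h2 := Set.ncard_le_ncard h1 (Set.toFinite _)
  rw [Set.ncard_diff hS (Set.toFinite _)] at h2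
  omega

lemma ncard_pairset {α : Type} (P : α → α → Prop) (c : α) :
    {q : α × α | P q.1 q.2 ∧ q.1 = c}.ncard = {w | P c w}.ncard := by
  have him : {q : α × α | P q.1 q.2 ∧ q.1 = c} = (fun w => (c, w)) '' {w | P c w} := by
    ext ⟨q1, q2⟩
    simp only [Set.mem_setOf_eq, Set.mem_image]
    constructor
    · rintro ⟨h, rfl⟩
      exact ⟨q2, h, rfl⟩
    · rintro ⟨w, hw, heq⟩
      obtain ⟨h1, h2⟩ := Prod.mk.injEq _ _ _ _ ▸ heq
      subst h1; subst h2
      exact ⟨hw, rfl⟩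
  rw [him, Set.ncard_image_of_injective _ (fun x y h => congrArg Prod.snd h)]

lemma aug_M_edge {M Mopt : Set (Sym2 V)} {m : ℕ} {p : ℕ → V}
    (hMm : ∀ e ∈ M, ∀ f ∈ M, e ≠ f → ∀ x : V, x ∈ e → x ∉ f)
    (hp : IsAugPath M Mopt m p) {c : ℕ} (hc : c ≤ 2*m+1) {e : Sym2 V}
    (he : e ∈ M) (hce : p c ∈ e) :
    ∃ c', c' % 2 = 1 ∧ c' + 1 ≤ 2*m + 1 ∧ (c = c' ∨ c = c' + 1) ∧
      e = s(p c', p (c' + 1)) := by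
  have h0 : c ≠ 0 := fun h => (hp.2.2 e he).1 (h ▸ hce)
  have h1 : c ≠ 2*m+1 := fun h => (hp.2.2 e he).2 (h ▸ hce)
  have hEq : ∀ f ∈ M, p c ∈ f → e = f := by
    intro f hf hcf
    by_contra hne
    exact hMm e he f hf hne (p c) hce hcf
  rcases Nat.mod_two_eq_zero_or_one c with hpar | hpar
  · have hc1 : c - 1 + 1 = c := by omega
    have hfM : s(p (c-1), p (c-1+1)) ∈ M := (hp.2.1 (c-1) (by omega)).2 (by omega)
    rw [hc1] at hfM
    have heq := hEq _ hfM (Sym2.mem_mk_right _ _)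
    refine ⟨c - 1, by omega, by omega, Or.inr (by omega), ?_⟩
    rw [hc1]
    exact heq
  · have hfM : s(p c, p (c+1)) ∈ M := (hp.2.1 c (by omega)).2 hpar
    exact ⟨c, hpar, by omega, Or.inl rfl, hEq _ hfM (Sym2.mem_mk_left _ _)⟩

lemma aug_Mopt_edge {M Mopt : Set (Sym2 V)} {m : ℕ} {p : ℕ → V}
    (hMm : ∀ e ∈ Mopt, ∀ f ∈ Mopt, e ≠ f → ∀ x : V, x ∈ e → x ∉ f)
    (hp : IsAugPath M Mopt m p) {c : ℕ} (hc : c ≤ 2*m+1) {e : Sym2 V}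
    (he : e ∈ Mopt) (hce : p c ∈ e) :
    ∃ c', c' % 2 = 0 ∧ c' + 1 ≤ 2*m + 1 ∧ (c = c' ∨ c = c' + 1) ∧
      e = s(p c', p (c' + 1)) := by
  have hEq : ∀ f ∈ Mopt, p c ∈ f → e = f := by
    intro f hf hcf
    by_contra hne
    exact hMm e he f hf hne (p c) hce hcf
  rcases Nat.mod_two_eq_zero_or_one c with hpar | hpar
  · have hfM : s(p c, p (c+1)) ∈ Mopt := (hp.2.1 c (by omega)).1 hpar
    exact ⟨c, hpar, by omega, Or.inl rfl, hEq _ hfM (Sym2.mem_mk_left _ _)⟩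
  · have hc1 : c - 1 + 1 = c := by omega
    have hfM : s(p (c-1), p (c-1+1)) ∈ Mopt := (hp.2.1 (c-1) (by omega)).1 (by omega)
    rw [hc1] at hfM
    have heq := hEq _ hfM (Sym2.mem_mk_right _ _)
    refine ⟨c - 1, by omega, by omega, Or.inr (by omega), ?_⟩
    rw [hc1]
    exact heq

lemma augPath_reverse {M Mopt : Set (Sym2 V)} {m : ℕ} {p : ℕ → V}
    (hp : IsAugPath M Mopt m p) :
    IsAugPath M Mopt m (fun j => p (2*m+1-j)) ∧
      pathSupp m (fun j => p (2*m+1-j)) = pathSupp m p := by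
  constructor
  · refine ⟨?_, ?_, ?_⟩
    · intro i hi j hj h
      have := hp.1 (2*m+1-i) (by omega) (2*m+1-j) (by omega) h
      omega
    · intro j hj
      have e1 : 2*m+1-(j+1) = 2*m-j := by omega
      have e2 : 2*m+1-j = (2*m-j)+1 := by omega
      constructor
      · intro hpar
        show s(p (2*m+1-j), p (2*m+1-(j+1))) ∈ Mopt
        rw [e1, e2, Sym2.eq_swap]
        exact (hp.2.1 (2*m-j) (by omega)).1 (by omega)
      · intro hpar
        show s(p (2*m+1-j), p (2*m+1-(j+1))) ∈ M
        rw [e1, e2, Sym2.eq_swap]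
        exact (hp.2.1 (2*m-j) (by omega)).2 (by omega)
    · intro e he
      have h := hp.2.2 e he
      refine ⟨?_, ?_⟩
      · show p (2*m+1-0) ∉ e
        rw [Nat.sub_zero]
        exact h.2
      · show p (2*m+1-(2*m+1)) ∉ e
        rw [Nat.sub_self]
        exact h.1
  · ext x
    simp only [pathSupp, Set.mem_image, Set.mem_setOf_eq]
    constructor
    · rintro ⟨j, hj, rfl⟩
      exact ⟨2*m+1-j, by omega, rfl⟩
    · rintro ⟨j, hj, rfl⟩
      exact ⟨2*m+1-j, by omega, congrArg p (by omega)⟩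

end Aux

section Main

set_option linter.unusedSectionVars false
set_option maxHeartbeats 1000000

lemma main_oriented {V : Type} [Fintype V] (Δ : ℕ) (hΔ : 4 ≤ Δ)
    (G : SimpleGraph V) (hdeg : maxDegLE G Δ)
    (E : GreedyExec V G) (h12 : E.Is12MinGreedy)
    (Mopt : Set (Sym2 V)) (hnf : NormalForm G E.M Mopt)
    (m : ℕ) (p : ℕ → V) (hp : IsAugPath E.M Mopt m p)
    (i : ℕ) (hc : creationStep E (pathSupp m p) i)
    (hdu : deg (E.Gs i) (E.sel i) = 2)
    (hd1 : Deg1EndpointAfter E E.M Mopt i)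
    (a : ℕ) (ha : a % 2 = 1) (ham : a + 1 ≤ 2*m)
    (hua : E.sel i = p a) (hva : E.oth i = p (a+1)) :
    (∀ w : V, ¬IsTransfer E E.M Mopt (E.sel i) w) ∧
    (∀ w : V, ¬IsTransfer E E.M Mopt (E.sel (i + 1)) w) ∧
    ((s(E.sel (i + 1), E.sel i) ∈ Mopt ∨ s(E.sel (i + 1), E.oth i) ∈ Mopt) →
      E.sel (i + 1) ∈ pathSupp m p ∧
      {q : V × V | IsTransfer E E.M Mopt q.1 q.2 ∧
        (q.1 = E.sel i ∨ q.1 = E.oth i)}.ncard ≤ Δ - 2 ∧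
      {q : V × V | IsTransfer E E.M Mopt q.1 q.2 ∧ q.1 = E.oth (i + 1)}.ncard ≤ Δ - 2) ∧
    (E.sel (i + 1) ∉ pathSupp m p →
      {q : V × V | IsTransfer E E.M Mopt q.1 q.2 ∧
        (q.1 = E.sel i ∨ q.1 = E.oth i)}.ncard ≤ Δ - 3 ∧
      {q : V × V | IsTransfer E E.M Mopt q.1 q.2 ∧ q.1 = E.oth (i + 1)}.ncard ≤ Δ - 1) := by
  obtain ⟨hik, hselX, hothX, hmin⟩ := hc
  obtain ⟨hMoptSub, hMoptDisj⟩ := hnf.1.1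
  have hMdisj := M_disj E
  have hinj : ∀ c ≤ 2*m+1, ∀ d ≤ 2*m+1, p c = p d → c = d := hp.1
  have ha1 : 1 ≤ a := by omega
  have hmem : ∀ c, c ≤ 2*m+1 → p c ∈ pathSupp m p := fun c hc' => ⟨c, hc', rfl⟩
  -- path vertices other than u_i, v_i are unmatched through step i
  have hUnm : ∀ c, c ≤ 2*m+1 → c ≠ a → c ≠ a+1 → ∀ l, l ≤ i → ¬ matchedAt E l (p c) := by
    intro c hcb hca hca1 l hl hmt
    obtain ⟨hlk, hx⟩ := hmt
    have heM : s(E.sel l, E.oth l) ∈ E.M := ⟨l, hlk, rfl⟩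
    have hpc : p c ∈ s(E.sel l, E.oth l) := by
      rcases hx with h | h
      · rw [h]; exact Sym2.mem_mk_left _ _
      · rw [h]; exact Sym2.mem_mk_right _ _
    obtain ⟨c', hc'par, hc'b, hcc', hEq⟩ := aug_M_edge hMdisj hp hcb heM hpc
    rw [Sym2.eq_iff] at hEq
    rcases Nat.lt_or_ge l i with hli | hli
    · apply hmin l hli
      rcases hEq with ⟨h1, h2⟩ | ⟨h1, h2⟩
      · exact ⟨by rw [h1]; exact hmem c' (by omega),
          by rw [h2]; exact hmem (c'+1) (by omega)⟩
      · exact ⟨by rw [h1]; exact hmem (c'+1) (by omega),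
          by rw [h2]; exact hmem c' (by omega)⟩
    · have hli' : l = i := by omega
      subst hli'
      rcases hEq with ⟨h1, h2⟩ | ⟨h1, h2⟩
      · have e1 : a = c' := hinj a (by omega) c' (by omega) (by rw [← hua, h1])
        have e2 : a + 1 = c' + 1 := hinj (a+1) (by omega) (c'+1) (by omega)
          (by rw [← hva, h2])
        omega
      · have e1 : a = c' + 1 := hinj a (by omega) (c'+1) (by omega) (by rw [← hua, h1])
        omega
  have hselM : matchedAt E i (E.sel i) := ⟨hik, Or.inl rfl⟩
  have hothM : matchedAt E i (E.oth i) := ⟨hik, Or.inr rfl⟩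
  have hselUnm : ∀ l, l < i → ¬ matchedAt E l (E.sel i) :=
    fun l hl hmt => absurd (matched_unique E hmt hselM) (Nat.ne_of_lt hl)
  have hothUnm : ∀ l, l < i → ¬ matchedAt E l (E.oth i) :=
    fun l hl hmt => absurd (matched_unique E hmt hothM) (Nat.ne_of_lt hl)
  have hMopt_uy : s(p (a-1), p a) ∈ Mopt := by
    have h := (hp.2.1 (a-1) (by omega)).1 (by omega)
    rwa [show a-1+1 = a by omega] at h
  have hMopt_vy' : s(p (a+1), p (a+2)) ∈ Mopt := (hp.2.1 (a+1) (by omega)).1 (by omega)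
  have hvy : E.oth i ≠ p (a-1) := by
    rw [hva]; intro h
    have := hinj (a+1) (by omega) (a-1) (by omega) h
    omega
  have hadj_uy : (E.Gs i).Adj (E.sel i) (p (a-1)) := by
    apply adj_Gs_of E (le_of_lt hik)
    · have h := (SimpleGraph.mem_edgeSet (G := G)).1 (hMoptSub hMopt_uy)
      rw [hua]; exact h.symm
    · exact hselUnm
    · exact fun l hl => hUnm (a-1) (by omega) (by omega) (by omega) l (by omega)
  -- CLAIM 1: sel i pays no transfers
  have hTu : ∀ w, ¬ IsTransfer E E.M Mopt (E.sel i) w := by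
    intro w ht
    obtain ⟨⟨hFG, hFM, hFMopt⟩, hend, _⟩ := isTransfer_elim E hselM ht
    have hadj_uw : (E.Gs i).Adj (E.sel i) w := transfer_adj E hselM ht
    have hadj_uv : (E.Gs i).Adj (E.sel i) (E.oth i) := E.adj i hik
    have hwv : w ≠ E.oth i := fun h => endpoint_not_matched E hend (h ▸ hothM)
    have hwy : w ≠ p (a-1) := by
      intro h
      apply hFMopt
      rw [hua, h, Sym2.eq_swap]
      exact hMopt_uy
    have hsub : ({E.oth i, p (a-1), w} : Set V) ⊆ (E.Gs i).neighborSet (E.sel i) := by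
      intro x hx
      simp only [Set.mem_insert_iff, Set.mem_singleton_iff] at hx
      rcases hx with rfl | rfl | rfl
      · exact hadj_uv
      · exact hadj_uy
      · exact hadj_uw
    have hcard := Set.ncard_le_ncard hsub (Set.toFinite _)
    have h3 : ({E.oth i, p (a-1), w} : Set V).ncard = 3 := by
      rw [Set.ncard_insert_of_notMem (by
        simp only [Set.mem_insert_iff, Set.mem_singleton_iff]
        push_neg
        exact ⟨hvy, fun h => hwv h.symm⟩) (Set.toFinite _),
        Set.ncard_pair (fun h => hwy h.symm)]
    unfold deg at hdu
    omega
  -- the degree-1 endpoint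
  obtain ⟨v0, wstar, hv0, htr0, hw1⟩ := hd1
  have hik1 : i + 1 < E.k := by
    rcases Nat.lt_or_ge (i+1) E.k with h | h
    · exact h
    · exfalso
      have hik1' : i + 1 = E.k := by omega
      have hw1' : deg (E.Gs E.k) wstar = 1 := by rw [← hik1']; exact hw1
      unfold deg at hw1'
      obtain ⟨z, hz⟩ := Set.nonempty_of_ncard_ne_zero (s := (E.Gs E.k).neighborSet wstar)
        (by omega)
      have hz' : s(wstar, z) ∈ (E.Gs E.k).edgeSet := (SimpleGraph.mem_edgeSet _).2 hz
      rw [E.final] at hz'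
      exact hz'
  have hsel1M : matchedAt E (i+1) (E.sel (i+1)) := ⟨hik1, Or.inl rfl⟩
  have hoth1M : matchedAt E (i+1) (E.oth (i+1)) := ⟨hik1, Or.inr rfl⟩
  have hdegsel1 : deg (E.Gs (i+1)) (E.sel (i+1)) ≤ 1 := by
    have h := h12 (i+1) hik1 ⟨wstar, Or.inl hw1⟩ wstar (by rw [hw1]; norm_num)
    rwa [hw1] at h
  -- CLAIM 2: sel (i+1) pays no transfers
  have hTu1 : ∀ w, ¬ IsTransfer E E.M Mopt (E.sel (i+1)) w := by
    intro w ht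
    obtain ⟨⟨hFG, hFM, hFMopt⟩, hend, _⟩ := isTransfer_elim E hsel1M ht
    have hadj_w : (E.Gs (i+1)).Adj (E.sel (i+1)) w := transfer_adj E hsel1M ht
    have hadj_o : (E.Gs (i+1)).Adj (E.sel (i+1)) (E.oth (i+1)) := E.adj (i+1) hik1
    have hwo : w ≠ E.oth (i+1) := fun h => endpoint_not_matched E hend (h ▸ hoth1M)
    have hsub : ({w, E.oth (i+1)} : Set V) ⊆ (E.Gs (i+1)).neighborSet (E.sel (i+1)) := by
      intro x hx
      simp only [Set.mem_insert_iff, Set.mem_singleton_iff] at hx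
      rcases hx with rfl | rfl
      · exact hadj_w
      · exact hadj_o
    have hcard := Set.ncard_le_ncard hsub (Set.toFinite _)
    rw [Set.ncard_pair hwo] at hcard
    unfold deg at hdegsel1
    omega
  -- transfers from oth i
  have hTvsub : {w | IsTransfer E E.M Mopt (E.oth i) w} ⊆ (E.Gs i).neighborSet (E.oth i) :=
    fun w ht => transfer_adj E hothM ht
  have hselN : E.sel i ∈ (E.Gs i).neighborSet (E.oth i) := (E.adj i hik).symm
  have hy'N : p (a+2) ∈ (E.Gs i).neighborSet (E.oth i) := by
    show (E.Gs i).Adj (E.oth i) (p (a+2))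
    apply adj_Gs_of E (le_of_lt hik)
    · rw [hva]
      exact (SimpleGraph.mem_edgeSet (G := G)).1 (hMoptSub hMopt_vy')
    · exact hothUnm
    · exact fun l hl => hUnm (a+2) (by omega) (by omega) (by omega) l (by omega)
  have hsy' : E.sel i ≠ p (a+2) := by
    rw [hua]; intro h
    have := hinj a (by omega) (a+2) (by omega) h
    omega
  have hselnotT : E.sel i ∉ {w | IsTransfer E E.M Mopt (E.oth i) w} := fun ht =>
    endpoint_not_matched E (isTransfer_elim E hothM ht).2.1 hselM
  have hy'notT : p (a+2) ∉ {w | IsTransfer E E.M Mopt (E.oth i) w} := by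
    intro ht
    obtain ⟨⟨hFG, hFM, hFMopt⟩, _, _⟩ := isTransfer_elim E hothM ht
    apply hFMopt
    rw [hva]
    exact hMopt_vy'
  have hNle : ((E.Gs i).neighborSet (E.oth i)).ncard ≤ Δ := by
    have hsub2 : (E.Gs i).neighborSet (E.oth i) ⊆ G.neighborSet (E.oth i) :=
      fun z hz => ((adj_Gs E (le_of_lt hik)).1 hz).1
    exact le_trans (Set.ncard_le_ncard hsub2 (Set.toFinite _)) (hdeg _)
  have hTv2 : {w | IsTransfer E E.M Mopt (E.oth i) w}.ncard ≤ Δ - 2 := by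
    have h := count_bound (S := {E.sel i, p (a+2)}) hTvsub
      (by
        intro x hx
        simp only [Set.mem_insert_iff, Set.mem_singleton_iff] at hx
        rcases hx with rfl | rfl
        · exact hselN
        · exact hy'N)
      (by
        intro x hx
        simp only [Set.mem_insert_iff, Set.mem_singleton_iff] at hx
        rcases hx with rfl | rfl
        · exact hselnotT
        · exact hy'notT)
      hNle
    rwa [Set.ncard_pair hsy'] at h
  -- the pair set equals the target set of oth i
  have hpairEq : {q : V × V | IsTransfer E E.M Mopt q.1 q.2 ∧
      (q.1 = E.sel i ∨ q.1 = E.oth i)}.ncard =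
      {w | IsTransfer E E.M Mopt (E.oth i) w}.ncard := by
    have heq : {q : V × V | IsTransfer E E.M Mopt q.1 q.2 ∧
        (q.1 = E.sel i ∨ q.1 = E.oth i)} =
        {q : V × V | IsTransfer E E.M Mopt q.1 q.2 ∧ q.1 = E.oth i} := by
      ext ⟨q1, q2⟩
      simp only [Set.mem_setOf_eq]
      constructor
      · rintro ⟨ht, (h | h)⟩
        · exact absurd (h ▸ ht) (hTu _)
        · exact ⟨ht, h⟩
      · rintro ⟨ht, h⟩
        exact ⟨ht, Or.inr h⟩
    rw [heq, ncard_pairset]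
  -- transfers from oth (i+1)
  have hToth_sub : {w | IsTransfer E E.M Mopt (E.oth (i+1)) w} ⊆
      (E.Gs (i+1)).neighborSet (E.oth (i+1)) := fun w ht => transfer_adj E hoth1M ht
  have hsel1N : E.sel (i+1) ∈ (E.Gs (i+1)).neighborSet (E.oth (i+1)) :=
    (E.adj (i+1) hik1).symm
  have hsel1notT : E.sel (i+1) ∉ {w | IsTransfer E E.M Mopt (E.oth (i+1)) w} := fun ht =>
    endpoint_not_matched E (isTransfer_elim E hoth1M ht).2.1 hsel1M
  have hN1le : ((E.Gs (i+1)).neighborSet (E.oth (i+1))).ncard ≤ Δ := by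
    have hsub2 : (E.Gs (i+1)).neighborSet (E.oth (i+1)) ⊆ G.neighborSet (E.oth (i+1)) :=
      fun z hz => ((adj_Gs E (le_of_lt hik1)).1 hz).1
    exact le_trans (Set.ncard_le_ncard hsub2 (Set.toFinite _)) (hdeg _)
  -- generic bound for oth (i+1) with an Mopt-neighbor present
  have hothbound : ∀ z : V, (E.Gs (i+1)).Adj (E.oth (i+1)) z → z ≠ E.sel (i+1) →
      s(E.oth (i+1), z) ∈ Mopt →
      {q : V × V | IsTransfer E E.M Mopt q.1 q.2 ∧ q.1 = E.oth (i+1)}.ncard ≤ Δ - 2 := by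
    intro z hadjz hzne hzMopt
    rw [ncard_pairset]
    have hznotT : z ∉ {w | IsTransfer E E.M Mopt (E.oth (i+1)) w} := by
      intro ht
      obtain ⟨⟨hFG, hFM, hFMopt⟩, _, _⟩ := isTransfer_elim E hoth1M ht
      exact hFMopt hzMopt
    have h := count_bound (S := {E.sel (i+1), z}) hToth_sub
      (by
        intro x hx
        simp only [Set.mem_insert_iff, Set.mem_singleton_iff] at hx
        rcases hx with rfl | rfl
        · exact hsel1N
        · exact hadjz)
      (by
        intro x hx
        simp only [Set.mem_insert_iff, Set.mem_singleton_iff] at hx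
        rcases hx with rfl | rfl
        · exact hsel1notT
        · exact hznotT)
      hN1le
    rwa [Set.ncard_pair (fun h' => hzne h'.symm)] at h
  have hsel1_ne_sel : E.sel (i+1) ≠ E.sel i := by
    intro h
    exact absurd (matched_unique E hsel1M (h ▸ hselM)) (by omega)
  have hsel1_ne_oth : E.sel (i+1) ≠ E.oth i := by
    intro h
    exact absurd (matched_unique E hsel1M (h ▸ hothM)) (by omega)
  refine ⟨hTu, hTu1, ?_, ?_⟩
  · -- case (a)
    intro hMoptAdj
    rcases hMoptAdj with h1 | h1
    · -- sel (i+1) is the Mopt-neighbor of sel i, i.e. p (a-1)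
      have hpa_mem : p a ∈ s(E.sel (i+1), E.sel i) := by
        rw [hua]; exact Sym2.mem_mk_right _ _
      obtain ⟨c', hc'par, hc'b, hac', hEq⟩ :=
        aug_Mopt_edge hMoptDisj hp (c := a) (by omega) h1 hpa_mem
      rw [Sym2.eq_iff] at hEq
      have hsel1p : E.sel (i+1) = p (a-1) := by
        rcases hEq with ⟨e1, e2⟩ | ⟨e1, e2⟩
        · have hcc : a = c' + 1 := hinj a (by omega) (c'+1) (by omega) (by rw [← hua, e2])
          rw [e1]
          congr 1
          omega
        · exfalso
          have := hinj a (by omega) c' (by omega) (by rw [← hua, e2])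
          omega
      have hM1 : s(E.sel (i+1), E.oth (i+1)) ∈ E.M := ⟨i+1, hik1, rfl⟩
      have hpm : p (a-1) ∈ s(E.sel (i+1), E.oth (i+1)) := by
        rw [← hsel1p]; exact Sym2.mem_mk_left _ _
      obtain ⟨d, hdpar, hdb, had, hEq2⟩ :=
        aug_M_edge hMdisj hp (c := a-1) (by omega) hM1 hpm
      have hd : d = a - 2 ∧ 3 ≤ a := by omega
      rw [Sym2.eq_iff] at hEq2
      have hoth1p : E.oth (i+1) = p (a-2) := by
        rcases hEq2 with ⟨e1, e2⟩ | ⟨e1, e2⟩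
        · exfalso
          have := hinj (a-1) (by omega) d (by omega) (by rw [← hsel1p, e1])
          omega
        · rw [e2]
          congr 1
          omega
      have hMopt_z : s(p (a-3), p (a-2)) ∈ Mopt := by
        have h := (hp.2.1 (a-3) (by omega)).1 (by omega)
        rwa [show a-3+1 = a-2 by omega] at h
      have hadj_z : (E.Gs (i+1)).Adj (E.oth (i+1)) (p (a-3)) := by
        apply adj_Gs_of E (le_of_lt hik1)
        · rw [hoth1p]
          exact ((SimpleGraph.mem_edgeSet (G := G)).1 (hMoptSub hMopt_z)).symm
        · exact fun l hl hmt => absurd (matched_unique E hmt hoth1M) (by omega)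
        · exact fun l hl => hUnm (a-3) (by omega) (by omega) (by omega) l (by omega)
      have hzne : p (a-3) ≠ E.sel (i+1) := by
        rw [hsel1p]; intro h
        have := hinj (a-3) (by omega) (a-1) (by omega) h
        omega
      have hzMopt : s(E.oth (i+1), p (a-3)) ∈ Mopt := by
        rw [hoth1p, Sym2.eq_swap]; exact hMopt_z
      refine ⟨by rw [hsel1p]; exact hmem (a-1) (by omega), ?_,
        hothbound _ hadj_z hzne hzMopt⟩
      rw [hpairEq]; exact hTv2
    · -- sel (i+1) is the Mopt-neighbor of oth i, i.e. p (a+2)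
      have hpa_mem : p (a+1) ∈ s(E.sel (i+1), E.oth i) := by
        rw [hva]; exact Sym2.mem_mk_right _ _
      obtain ⟨c', hc'par, hc'b, hac', hEq⟩ :=
        aug_Mopt_edge hMoptDisj hp (c := a+1) (by omega) h1 hpa_mem
      rw [Sym2.eq_iff] at hEq
      have hsel1p : E.sel (i+1) = p (a+2) := by
        rcases hEq with ⟨e1, e2⟩ | ⟨e1, e2⟩
        · exfalso
          have := hinj (a+1) (by omega) (c'+1) (by omega) (by rw [← hva, e2])
          omega
        · have hc : a + 1 = c' := hinj (a+1) (by omega) c' (by omega) (by rw [← hva, e2])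
          rw [e1]
          congr 1
          omega
      have hM1 : s(E.sel (i+1), E.oth (i+1)) ∈ E.M := ⟨i+1, hik1, rfl⟩
      have hpm : p (a+2) ∈ s(E.sel (i+1), E.oth (i+1)) := by
        rw [← hsel1p]; exact Sym2.mem_mk_left _ _
      obtain ⟨d, hdpar, hdb, had, hEq2⟩ :=
        aug_M_edge hMdisj hp (c := a+2) (by omega) hM1 hpm
      have hd : d = a + 2 := by omega
      rw [Sym2.eq_iff] at hEq2
      have hoth1p : E.oth (i+1) = p (a+3) := by
        rcases hEq2 with ⟨e1, e2⟩ | ⟨e1, e2⟩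
        · rw [e2]
          congr 1
          omega
        · exfalso
          have := hinj (a+2) (by omega) (d+1) (by omega) (by rw [← hsel1p, e1])
          omega
      have ha3 : a + 3 ≤ 2*m := by
        rcases Nat.lt_or_ge (a+3) (2*m+1) with h | h
        · omega
        · exfalso
          have he : a + 3 = 2*m+1 := by omega
          apply (hp.2.2 _ hM1).2
          rw [← he, ← hoth1p]
          exact Sym2.mem_mk_right _ _
      have hMopt_z : s(p (a+3), p (a+4)) ∈ Mopt := (hp.2.1 (a+3) (by omega)).1 (by omega)
      have hadj_z : (E.Gs (i+1)).Adj (E.oth (i+1)) (p (a+4)) := by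
        apply adj_Gs_of E (le_of_lt hik1)
        · rw [hoth1p]
          exact (SimpleGraph.mem_edgeSet (G := G)).1 (hMoptSub hMopt_z)
        · exact fun l hl hmt => absurd (matched_unique E hmt hoth1M) (by omega)
        · exact fun l hl => hUnm (a+4) (by omega) (by omega) (by omega) l (by omega)
      have hzne : p (a+4) ≠ E.sel (i+1) := by
        rw [hsel1p]; intro h
        have := hinj (a+4) (by omega) (a+2) (by omega) h
        omega
      have hzMopt : s(E.oth (i+1), p (a+4)) ∈ Mopt := by
        rw [hoth1p]; exact hMopt_z
      refine ⟨by rw [hsel1p]; exact hmem (a+2) (by omega), ?_,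
        hothbound _ hadj_z hzne hzMopt⟩
      rw [hpairEq]; exact hTv2
  · -- case (b)
    intro hb
    have hs1y' : E.sel (i+1) ≠ p (a+2) := by
      intro h
      exact hb (by rw [h]; exact hmem (a+2) (by omega))
    have hNmono : ∀ x z : V, (E.Gs (i+1)).Adj x z → (E.Gs i).Adj x z := by
      intro x z hz
      rw [adj_Gs E (le_of_lt hik1)] at hz
      rw [adj_Gs E (le_of_lt hik)]
      exact ⟨hz.1, fun j hj => hz.2 j (by omega)⟩
    have hadj1 : (E.Gs i).Adj (E.sel (i+1)) (E.oth (i+1)) := hNmono _ _ (E.adj (i+1) hik1)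
    have hpos : 0 < deg (E.Gs i) (E.sel (i+1)) := by
      unfold deg
      exact (Set.ncard_pos (Set.toFinite _)).2 ⟨_, hadj1⟩
    have hdeg2 : 2 ≤ deg (E.Gs i) (E.sel (i+1)) := by
      have h := h12 i hik ⟨E.sel i, Or.inr hdu⟩ (E.sel (i+1)) hpos
      omega
    have hex : ∃ t, (E.Gs i).Adj (E.sel (i+1)) t ∧ ¬ (E.Gs (i+1)).Adj (E.sel (i+1)) t := by
      by_contra hno
      push_neg at hno
      have hsub : (E.Gs i).neighborSet (E.sel (i+1)) ⊆
          (E.Gs (i+1)).neighborSet (E.sel (i+1)) := fun z hz => hno z hz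
      have h := Set.ncard_le_ncard hsub (Set.toFinite _)
      unfold deg at hdeg2 hdegsel1
      omega
    obtain ⟨t, hti, hti1⟩ := hex
    have htoth : t = E.oth i := by
      have htiG := hti
      rw [adj_Gs E (le_of_lt hik)] at htiG
      rw [adj_Gs E (le_of_lt hik1)] at hti1
      push_neg at hti1
      obtain ⟨j, hj, himp⟩ := hti1 htiG.1
      have hji : j = i := by
        rcases Nat.lt_succ_iff_lt_or_eq.1 hj with h | h
        · exfalso
          have h4 := htiG.2 j h
          exact h4.2.2.2 (himp h4.1 h4.2.1 h4.2.2.1)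
        · exact h
      rw [hji] at himp
      by_cases hts : t = E.sel i
      · exfalso
        have hmemN : E.sel (i+1) ∈ (E.Gs i).neighborSet (E.sel i) := by
          have h' := hti
          rw [hts] at h'
          exact h'.symm
        have hNu : ({E.oth i, p (a-1)} : Set V) = (E.Gs i).neighborSet (E.sel i) := by
          apply Set.eq_of_subset_of_ncard_le
          · intro x hx
            simp only [Set.mem_insert_iff, Set.mem_singleton_iff] at hx
            rcases hx with rfl | rfl
            · exact E.adj i hik
            · exact hadj_uy
          · unfold deg at hdu
            rw [Set.ncard_pair hvy]
            omega
          · exact Set.toFinite _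
        rw [← hNu] at hmemN
        simp only [Set.mem_insert_iff, Set.mem_singleton_iff] at hmemN
        rcases hmemN with h | h
        · exact hsel1_ne_oth h
        · exact hb (by rw [h]; exact hmem (a-1) (by omega))
      · exact himp hsel1_ne_sel hsel1_ne_oth hts
    have hadj_vt : (E.Gs i).Adj (E.oth i) (E.sel (i+1)) := by
      rw [htoth] at hti
      exact hti.symm
    have hs1notTv : E.sel (i+1) ∉ {w | IsTransfer E E.M Mopt (E.oth i) w} := fun ht =>
      endpoint_not_matched E (isTransfer_elim E hothM ht).2.1 hsel1M
    constructor
    · rw [hpairEq]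
      have h := count_bound (S := {E.sel i, p (a+2), E.sel (i+1)}) hTvsub
        (by
          intro x hx
          simp only [Set.mem_insert_iff, Set.mem_singleton_iff] at hx
          rcases hx with rfl | rfl | rfl
          · exact hselN
          · exact hy'N
          · exact hadj_vt)
        (by
          intro x hx
          simp only [Set.mem_insert_iff, Set.mem_singleton_iff] at hx
          rcases hx with rfl | rfl | rfl
          · exact hselnotT
          · exact hy'notT
          · exact hs1notTv)
        hNle
      have h3 : ({E.sel i, p (a+2), E.sel (i+1)} : Set V).ncard = 3 := by
        rw [Set.ncard_insert_of_notMem (by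
          simp only [Set.mem_insert_iff, Set.mem_singleton_iff]
          push_neg
          exact ⟨hsy', fun h' => hsel1_ne_sel h'.symm⟩) (Set.toFinite _),
          Set.ncard_pair (fun h' => hs1y' h'.symm)]
      rw [h3] at h
      exact h
    · rw [ncard_pairset]
      have h := count_bound (S := {E.sel (i+1)}) hToth_sub
        (by
          intro x hx
          simp only [Set.mem_singleton_iff] at hx
          subst hx
          exact hsel1N)
        (by
          intro x hx
          simp only [Set.mem_singleton_iff] at hx
          subst hx
          exact hsel1notT)
        hN1le
      rwa [Set.ncard_singleton] at h

end Main

/-- the degree-2 creation step case: u_i and u_{i+1} pay no transfers, and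
the transfer counts of {u_i, v_i} and of v_{i+1} are bounded according to whether
u_{i+1} belongs to X or not. -/
theorem deg2_creation_coin_bounds {V : Type} [Fintype V] (Δ : ℕ) (hΔ : 4 ≤ Δ)
    (G : SimpleGraph V) (hdeg : maxDegLE G Δ)
    (E : GreedyExec V G) (h12 : E.Is12MinGreedy)
    (Mopt : Set (Sym2 V)) (hnf : NormalForm G E.M Mopt)
    (m : ℕ) (p : ℕ → V) (hp : IsAugPath E.M Mopt m p)
    (i : ℕ) (hc : creationStep E (pathSupp m p) i)
    (hdu : deg (E.Gs i) (E.sel i) = 2)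
    (hd1 : Deg1EndpointAfter E E.M Mopt i) :
    (∀ w : V, ¬IsTransfer E E.M Mopt (E.sel i) w) ∧
    (∀ w : V, ¬IsTransfer E E.M Mopt (E.sel (i + 1)) w) ∧
    ((s(E.sel (i + 1), E.sel i) ∈ Mopt ∨ s(E.sel (i + 1), E.oth i) ∈ Mopt) →
      E.sel (i + 1) ∈ pathSupp m p ∧
      {q : V × V | IsTransfer E E.M Mopt q.1 q.2 ∧
        (q.1 = E.sel i ∨ q.1 = E.oth i)}.ncard ≤ Δ - 2 ∧
      {q : V × V | IsTransfer E E.M Mopt q.1 q.2 ∧ q.1 = E.oth (i + 1)}.ncard ≤ Δ - 2) ∧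
    (E.sel (i + 1) ∉ pathSupp m p →
      {q : V × V | IsTransfer E E.M Mopt q.1 q.2 ∧
        (q.1 = E.sel i ∨ q.1 = E.oth i)}.ncard ≤ Δ - 3 ∧
      {q : V × V | IsTransfer E E.M Mopt q.1 q.2 ∧ q.1 = E.oth (i + 1)}.ncard ≤ Δ - 1) := by
  have hik : i < E.k := hc.1
  obtain ⟨a0, ha0b, ha0⟩ := hc.2.1
  have ha0b' : a0 ≤ 2*m+1 := ha0b
  have hM_uv : s(E.sel i, E.oth i) ∈ E.M := ⟨i, hik, rfl⟩
  have hmem0 : p a0 ∈ s(E.sel i, E.oth i) := by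
    rw [ha0]; exact Sym2.mem_mk_left _ _
  obtain ⟨c', hc'par, hc'b, hac', hEq⟩ := aug_M_edge (M_disj E) hp ha0b' hM_uv hmem0
  rw [Sym2.eq_iff] at hEq
  rcases hEq with ⟨e1, e2⟩ | ⟨e1, e2⟩
  · have hc2m : c' + 1 ≤ 2*m := by
      rcases Nat.lt_or_ge (c'+1) (2*m+1) with h | h
      · omega
      · exfalso
        apply (hp.2.2 _ hM_uv).2
        rw [show 2*m+1 = c'+1 by omega, ← e2]
        exact Sym2.mem_mk_right _ _
    exact main_oriented Δ hΔ G hdeg E h12 Mopt hnf m p hp i hc hdu hd1 c' hc'par hc2m e1 e2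
  · obtain ⟨hq, hsupp⟩ := augPath_reverse hp
    have hc1 : 1 ≤ c' := by omega
    have hapar : (2*m - c') % 2 = 1 := by omega
    have ham : (2*m - c') + 1 ≤ 2*m := by omega
    have hua : E.sel i = (fun j => p (2*m+1-j)) (2*m - c') := by
      show E.sel i = p (2*m+1-(2*m-c'))
      rw [e1]; congr 1; omega
    have hva : E.oth i = (fun j => p (2*m+1-j)) ((2*m - c') + 1) := by
      show E.oth i = p (2*m+1-(2*m-c'+1))
      rw [e2]; congr 1; omega
    have hc'' : creationStep E (pathSupp m (fun j => p (2*m+1-j))) i := by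
      rw [hsupp]; exact hc
    have h := main_oriented Δ hΔ G hdeg E h12 Mopt hnf m _ hq i hc'' hdu hd1
      (2*m-c') hapar ham hua hva
    rwa [hsupp] at h

end

end MinGreedy
end
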